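/- (Remark 1) Let y = A·x_S (noiseless measurements) where x_S ∈ ℝⁿ is K-sparse with support S, and A satisfies the RIP of order 3K with constant δ_{3K} and of order 4K with constant δ_{4K} < 1, with ρ_{4K} < 1. Let x^0, x^1, …, x^k be successive CoSaMP iterates with x^0 = 0. If ρ_{4K}^k·‖x_S‖ < x*_K, equivalently k > ln(‖x_S‖/x*_K)/ln(1/ρ_{4K}), then x^k = x_S. -/

import Mathlib

open Finset

/-- Euclidean norm of a vector. -/
noncomputable def euclNorm {d : ℕ} (x : Fin d → ℝ) : ℝ := Real.sqrt (∑ i, x i ^ 2)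

/-- The support of a vector, as a finite set of indices. -/
noncomputable def supp {d : ℕ} (x : Fin d → ℝ) : Finset (Fin d) :=
  Finset.univ.filter (fun i => x i ≠ 0)

/-- `restrict x T` agrees with `x` on `T` and is zero outside `T`. -/
def restrict {d : ℕ} (x : Fin d → ℝ) (T : Finset (Fin d)) : Fin d → ℝ :=
  fun i => if i ∈ T then x i else 0

/-- `A` satisfies the Restricted Isometry Property of order `L` with constant `δ ∈ (0,1)`. -/
def RIP {m d : ℕ} (A : Matrix (Fin m) (Fin d) ℝ) (L : ℕ) (δ : ℝ) : Prop :=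
  0 < δ ∧ δ < 1 ∧
  ∀ x : Fin d → ℝ, (supp x).card ≤ L →
    (1 - δ) * euclNorm x ^ 2 ≤ euclNorm (A.mulVec x) ^ 2 ∧
    euclNorm (A.mulVec x) ^ 2 ≤ (1 + δ) * euclNorm x ^ 2

/-- `u` is the least-squares solution on the index set `U`: it is supported on `U` and
`y - A u` is orthogonal to `A z` whenever `z` is supported on `U`. -/
def LeastSq {m d : ℕ} (A : Matrix (Fin m) (Fin d) ℝ) (y : Fin m → ℝ)
    (U : Finset (Fin d)) (u : Fin d → ℝ) : Prop :=
  supp u ⊆ U ∧ ∀ z : Fin d → ℝ, supp z ⊆ U →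
    ∑ i, (y i - A.mulVec u i) * A.mulVec z i = 0

/-- One CoSaMP iteration with sparsity `K`, mapping the iterate `xprev` to `xnext`:
identification (`h`, the `2K` largest residual correlations), augmentation
(`supp xprev ∪ h`), least-squares estimation (`u`), and hard-thresholding update. -/
def CoSaMPStep {m d : ℕ} (K : ℕ) (A : Matrix (Fin m) (Fin d) ℝ) (y : Fin m → ℝ)
    (xprev xnext : Fin d → ℝ) : Prop :=
  ∃ (h Snext : Finset (Fin d)) (u : Fin d → ℝ),
    h.card = 2 * K ∧
    (∀ i ∈ h, ∀ j ∉ h,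
      |A.transpose.mulVec (y - A.mulVec xprev) j| ≤
        |A.transpose.mulVec (y - A.mulVec xprev) i|) ∧
    LeastSq A y (supp xprev ∪ h) u ∧
    Snext ⊆ supp xprev ∪ h ∧ Snext.card = K ∧
    (∀ i ∈ Snext, ∀ j ∉ Snext, |u j| ≤ |u i|) ∧
    xnext = restrict u Snext

/-!
Write `v = xS - xp` for the error before a CoSaMP iteration. Since `AᵀA - 1` has norm at most `δ`
on vectors supported on `4K` indices, the `2K` largest correlations `Aᵀ A v` pick up all of `v`
except an energy of at most `2δ²‖v‖²`; so the augmented support `U` misses at most that much of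
`xS`. The least-squares residual `w = xS - u` is almost orthogonal to vectors supported on `U`,
which gives `(1 - δ²)‖w‖² ≤` (energy of `xS` off `U`), and pruning to the `K` largest entries costs
at most `2‖w|_U‖² ≤ 2δ²‖w‖²`. Together the error contracts by `ρ_{4K}` per iteration. At the last
iteration the energy missed by `U` is then below `(x*_K)²`, so no entry of `xS` is missed, the
residual `w` vanishes, and the last iterate is `xS` itself.
-/


open Matrix

theorem Finset.sum_le_sum_of_card_le_of_forall_le {α : Type*} {s t : Finset α} {f : α → ℝ}
    (hst : s.card ≤ t.card) (hf : ∀ i ∈ t, 0 ≤ f i) (hle : ∀ j ∈ s, ∀ i ∈ t, f j ≤ f i) :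
    ∑ j ∈ s, f j ≤ ∑ i ∈ t, f i := by
  rcases t.eq_empty_or_nonempty with rfl | ht
  · simp_all
  obtain ⟨i₀, hi₀, hmin⟩ := t.exists_min_image f ht
  calc ∑ j ∈ s, f j ≤ s.card • f i₀ := sum_le_card_nsmul s f _ fun j hj => hle j hj i₀ hi₀
    _ ≤ t.card • f i₀ := nsmul_le_nsmul_left (hf i₀ hi₀) hst
    _ ≤ ∑ i ∈ t, f i := card_nsmul_le_sum t f _ hmin

theorem sq_le_sq_of_sq_le_mul {a c : ℝ} (h : a ^ 2 ≤ c * a) : a ^ 2 ≤ c ^ 2 := by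
  nlinarith [sq_nonneg (c - a)]

section Vectors

variable {d : ℕ}

theorem euclNorm_eq_norm (x : Fin d → ℝ) :
    euclNorm x = ‖(WithLp.toLp 2 x : EuclideanSpace ℝ (Fin d))‖ := by
  simp [euclNorm, EuclideanSpace.norm_eq]

theorem euclNorm_nonneg (x : Fin d → ℝ) : 0 ≤ euclNorm x :=
  Real.sqrt_nonneg _

theorem euclNorm_sq (x : Fin d → ℝ) : euclNorm x ^ 2 = ∑ i, x i ^ 2 :=
  Real.sq_sqrt (sum_nonneg fun _ _ => sq_nonneg _)

theorem euclNorm_eq_zero {x : Fin d → ℝ} : euclNorm x = 0 ↔ x = 0 := by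
  rw [euclNorm_eq_norm, norm_eq_zero, WithLp.toLp_eq_zero]

theorem euclNorm_smul (c : ℝ) (x : Fin d → ℝ) : euclNorm (c • x) = |c| * euclNorm x := by
  rw [euclNorm_eq_norm, euclNorm_eq_norm, WithLp.toLp_smul, norm_smul, Real.norm_eq_abs]

theorem euclNorm_neg (x : Fin d → ℝ) : euclNorm (-x) = euclNorm x := by
  rw [euclNorm_eq_norm, euclNorm_eq_norm, WithLp.toLp_neg, norm_neg]

theorem dotProduct_self_eq_euclNorm_sq (x : Fin d → ℝ) : x ⬝ᵥ x = euclNorm x ^ 2 := by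
  rw [euclNorm_sq]
  simp only [dotProduct, sq]

theorem abs_le_euclNorm (x : Fin d → ℝ) (i : Fin d) : |x i| ≤ euclNorm x := by
  rw [← Real.sqrt_sq_eq_abs]
  exact Real.sqrt_le_sqrt
    (single_le_sum (fun j _ => sq_nonneg (x j)) (mem_univ i))

theorem eq_zero_of_euclNorm_lt {x : Fin d → ℝ} {t : ℝ} (ht : ∀ i, x i ≠ 0 → t ≤ |x i|)
    (hlt : euclNorm x < t) : x = 0 :=
  funext fun i => by_contra fun hne => (hlt.trans_le (ht i hne)).not_ge (abs_le_euclNorm x i)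

theorem mem_supp {x : Fin d → ℝ} {i : Fin d} : i ∈ supp x ↔ x i ≠ 0 := by
  simp [supp]

theorem eq_zero_of_notMem_supp {x : Fin d → ℝ} {i : Fin d} (h : i ∉ supp x) : x i = 0 :=
  not_not.1 (mt mem_supp.2 h)

theorem supp_add_subset (x y : Fin d → ℝ) : supp (x + y) ⊆ supp x ∪ supp y := by
  intro i
  simp only [mem_union, mem_supp, Pi.add_apply]
  contrapose!
  rintro ⟨hx, hy⟩
  simp [hx, hy]

theorem supp_sub_subset (x y : Fin d → ℝ) : supp (x - y) ⊆ supp x ∪ supp y := by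
  intro i
  simp only [mem_union, mem_supp, Pi.sub_apply]
  contrapose!
  rintro ⟨hx, hy⟩
  simp [hx, hy]

theorem supp_smul_subset (c : ℝ) (x : Fin d → ℝ) : supp (c • x) ⊆ supp x := by
  intro i
  simp only [mem_supp, Pi.smul_apply, smul_eq_mul]
  exact right_ne_zero_of_mul

theorem supp_neg (x : Fin d → ℝ) : supp (-x) = supp x := by
  ext i
  simp [mem_supp]

theorem supp_restrict_subset (x : Fin d → ℝ) (T : Finset (Fin d)) : supp (restrict x T) ⊆ T := by
  intro i hi
  by_contra hiT
  exact mem_supp.1 hi (if_neg hiT)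

theorem dotProduct_restrict_self (x : Fin d → ℝ) (T : Finset (Fin d)) :
    x ⬝ᵥ restrict x T = ∑ i ∈ T, x i ^ 2 := by
  simp only [dotProduct, _root_.restrict, mul_ite, mul_zero, sum_ite_mem,
    univ_inter, sq]

theorem euclNorm_restrict_sq (x : Fin d → ℝ) (T : Finset (Fin d)) :
    euclNorm (restrict x T) ^ 2 = ∑ i ∈ T, x i ^ 2 := by
  rw [euclNorm_sq]
  simp only [_root_.restrict, ite_pow, ne_eq, OfNat.ofNat_ne_zero, not_false_eq_true, zero_pow,
    sum_ite_mem, univ_inter]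

end Vectors

section RIP

variable {m d L : ℕ} {A : Matrix (Fin m) (Fin d) ℝ} {δ : ℝ}

theorem RIP.sq_lt_one (hA : RIP A L δ) : δ ^ 2 < 1 := by
  nlinarith [hA.1, hA.2.1]

theorem RIP.mulVec_dotProduct_sub_le_half (hA : RIP A L δ) {x y : Fin d → ℝ}
    (hxy : (supp x ∪ supp y).card ≤ L) :
    A *ᵥ x ⬝ᵥ A *ᵥ y - x ⬝ᵥ y ≤ δ / 2 * (euclNorm x ^ 2 + euclNorm y ^ 2) := by
  have hadd := (hA.2.2 (x + y) ((card_le_card (supp_add_subset x y)).trans hxy)).2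
  have hsub := (hA.2.2 (x - y) ((card_le_card (supp_sub_subset x y)).trans hxy)).1
  simp only [← dotProduct_self_eq_euclNorm_sq, mulVec_add, mulVec_sub, add_dotProduct,
    dotProduct_add, sub_dotProduct, dotProduct_sub, dotProduct_comm y x,
    dotProduct_comm (A *ᵥ y) (A *ᵥ x)] at hadd hsub ⊢
  linarith

theorem RIP.mulVec_dotProduct_sub_le (hA : RIP A L δ) {x y : Fin d → ℝ}
    (hxy : (supp x ∪ supp y).card ≤ L) :
    A *ᵥ x ⬝ᵥ A *ᵥ y - x ⬝ᵥ y ≤ δ * euclNorm x * euclNorm y := by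
  rcases (mul_nonneg (euclNorm_nonneg x) (euclNorm_nonneg y)).eq_or_lt with hxy0 | hxy0
  · obtain hx | hy := mul_eq_zero.1 hxy0.symm
    · obtain rfl := euclNorm_eq_zero.1 hx
      simp [hx]
    · obtain rfl := euclNorm_eq_zero.1 hy
      simp [hy]
  -- rescale `x` and `y` to the same norm `‖x‖ ‖y‖`
  have h := hA.mulVec_dotProduct_sub_le_half (x := euclNorm y • x) (y := euclNorm x • y)
    ((card_le_card (union_subset_union (supp_smul_subset _ _) (supp_smul_subset _ _))).trans hxy)
  simp only [mulVec_smul, smul_dotProduct, dotProduct_smul, smul_eq_mul, euclNorm_smul,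
    abs_of_nonneg (euclNorm_nonneg _)] at h
  refine le_of_mul_le_mul_left ?_ hxy0
  linear_combination h

theorem RIP.abs_mulVec_dotProduct_sub_le (hA : RIP A L δ) {x y : Fin d → ℝ}
    (hxy : (supp x ∪ supp y).card ≤ L) :
    |A *ᵥ x ⬝ᵥ A *ᵥ y - x ⬝ᵥ y| ≤ δ * euclNorm x * euclNorm y := by
  refine abs_le.2 ⟨?_, hA.mulVec_dotProduct_sub_le hxy⟩
  have h := hA.mulVec_dotProduct_sub_le (x := -x) (y := y) (by rwa [supp_neg])
  rw [mulVec_neg, neg_dotProduct, neg_dotProduct, euclNorm_neg] at h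
  linarith

theorem RIP.sum_sq_gram_sub_le (hA : RIP A L δ) (v : Fin d → ℝ) (W : Finset (Fin d))
    (hW : (W ∪ supp v).card ≤ L) :
    ∑ i ∈ W, (Aᵀ *ᵥ (A *ᵥ v) - v) i ^ 2 ≤ δ ^ 2 * euclNorm v ^ 2 := by
  set e := Aᵀ *ᵥ (A *ᵥ v) - v
  set z := restrict e W
  have hez : e ⬝ᵥ z = A *ᵥ v ⬝ᵥ A *ᵥ z - v ⬝ᵥ z := by
    rw [sub_dotProduct, mulVec_transpose, ← dotProduct_mulVec]
  have hcard : (supp v ∪ supp z).card ≤ L :=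
    (card_le_card (union_subset subset_union_right
      ((supp_restrict_subset e W).trans subset_union_left))).trans hW
  have h := hA.abs_mulVec_dotProduct_sub_le hcard
  rw [← hez, dotProduct_restrict_self, ← euclNorm_restrict_sq] at h
  rw [← euclNorm_restrict_sq, ← mul_pow]
  exact sq_le_sq_of_sq_le_mul ((le_abs_self _).trans (by linarith))

theorem LeastSq.sum_sq_sub_le (hA : RIP A L δ) {x u : Fin d → ℝ} {U : Finset (Fin d)}
    (hLS : LeastSq A (A *ᵥ x) U u) (hL : (supp x ∪ U).card ≤ L) :
    ∑ i ∈ U, (x - u) i ^ 2 ≤ δ ^ 2 * euclNorm (x - u) ^ 2 := by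
  set w := x - u
  set z := restrict w U
  have horth : A *ᵥ w ⬝ᵥ A *ᵥ z = 0 := by
    rw [mulVec_sub]
    exact hLS.2 z (supp_restrict_subset w U)
  have hcard : (supp w ∪ supp z).card ≤ L :=
    (card_le_card (union_subset
      ((supp_sub_subset x u).trans (union_subset_union_right hLS.1))
      ((supp_restrict_subset w U).trans subset_union_right))).trans hL
  have h := hA.abs_mulVec_dotProduct_sub_le hcard
  rw [horth, zero_sub, abs_neg, dotProduct_restrict_self, ← euclNorm_restrict_sq] at h
  rw [← euclNorm_restrict_sq, ← mul_pow]
  exact sq_le_sq_of_sq_le_mul ((le_abs_self _).trans (by linarith))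

theorem LeastSq.one_sub_sq_mul_le (hA : RIP A L δ) {x u : Fin d → ℝ} {U : Finset (Fin d)}
    (hLS : LeastSq A (A *ᵥ x) U u) (hL : (supp x ∪ U).card ≤ L) :
    (1 - δ ^ 2) * euclNorm (x - u) ^ 2 ≤ ∑ i ∈ Uᶜ, x i ^ 2 := by
  have hsplit := sum_add_sum_compl U fun i => (x - u) i ^ 2
  have hoff : ∑ i ∈ Uᶜ, (x - u) i ^ 2 = ∑ i ∈ Uᶜ, x i ^ 2 := sum_congr rfl fun i hi => by
    rw [Pi.sub_apply, eq_zero_of_notMem_supp fun h => mem_compl.1 hi (hLS.1 h), sub_zero]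
  rw [← euclNorm_sq] at hsplit
  linarith [hLS.sum_sq_sub_le hA hL]

end RIP

section Steps

variable {m d L : ℕ} {A : Matrix (Fin m) (Fin d) ℝ} {δ : ℝ}

theorem RIP.sum_sq_compl_le_of_top_correlations (hA : RIP A L δ) (v : Fin d → ℝ)
    {h : Finset (Fin d)} (hcard : (supp v).card ≤ h.card) (hL : (h ∪ supp v).card ≤ L)
    (htop : ∀ i ∈ h, ∀ j ∉ h, |(Aᵀ *ᵥ (A *ᵥ v)) j| ≤ |(Aᵀ *ᵥ (A *ᵥ v)) i|) :
    ∑ i ∈ hᶜ, v i ^ 2 ≤ 2 * δ ^ 2 * euclNorm v ^ 2 := by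
  set g := Aᵀ *ᵥ (A *ᵥ v)
  set T := supp v
  have hoff : ∑ i ∈ T \ h, v i ^ 2 = ∑ i ∈ hᶜ, v i ^ 2 := by
    refine sum_subset (fun i hi => mem_compl.2 (mem_sdiff.1 hi).2) fun i hi hiT => ?_
    rw [eq_zero_of_notMem_supp fun hT => hiT (mem_sdiff.2 ⟨hT, mem_compl.1 hi⟩)]
    ring
  have hdom : ∑ i ∈ T \ h, g i ^ 2 ≤ ∑ i ∈ h \ T, g i ^ 2 :=
    sum_le_sum_of_card_le_of_forall_le (card_sdiff_le_card_sdiff_iff.2 hcard)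
      (fun _ _ => sq_nonneg _)
      fun j hj i hi => sq_le_sq.2 (htop i (mem_sdiff.1 hi).1 j (mem_sdiff.1 hj).2)
  have hgram : ∑ i ∈ h \ T, g i ^ 2 = ∑ i ∈ h \ T, (g - v) i ^ 2 :=
    sum_congr rfl fun i hi => by
      rw [Pi.sub_apply, eq_zero_of_notMem_supp (mem_sdiff.1 hi).2, sub_zero]
  have herr := hA.sum_sq_gram_sub_le v (T \ h ∪ h \ T) <| (card_le_card <|
    union_subset (union_subset (sdiff_subset.trans subset_union_right)
      (sdiff_subset.trans subset_union_left)) subset_union_right).trans hL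
  rw [sum_union disjoint_sdiff_sdiff] at herr
  calc ∑ i ∈ hᶜ, v i ^ 2 = ∑ i ∈ T \ h, v i ^ 2 := hoff.symm
    _ ≤ ∑ i ∈ T \ h, 2 * (g i ^ 2 + (g - v) i ^ 2) := sum_le_sum fun i _ => by
      rw [Pi.sub_apply]
      nlinarith [sq_nonneg (2 * g i - v i)]
    _ = 2 * (∑ i ∈ T \ h, g i ^ 2 + ∑ i ∈ T \ h, (g - v) i ^ 2) := by
      rw [← mul_sum, sum_add_distrib]
    _ ≤ 2 * δ ^ 2 * euclNorm v ^ 2 := by linarith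

theorem sq_sub_restrict_apply_le {x u : Fin d → ℝ} {T U : Finset (Fin d)} (hu : supp u ⊆ U)
    (i : Fin d) :
    (x - restrict u T) i ^ 2 ≤
      (x - u) i ^ 2 + if i ∈ (supp x \ T) ∩ U then 2 * ((x - u) i ^ 2 + u i ^ 2) else 0 := by
  by_cases hiT : i ∈ T
  · simp [_root_.restrict, hiT]
  split_ifs with hiJ
  · simp only [Pi.sub_apply, _root_.restrict, hiT, if_false, sub_zero]
    nlinarith [sq_nonneg (x i - 2 * u i)]
  · have hxu : x i = 0 ∨ u i = 0 := by
      by_cases hiS : i ∈ supp x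
      · exact .inr <| eq_zero_of_notMem_supp fun hiu =>
          hiJ (mem_inter.2 ⟨mem_sdiff.2 ⟨hiS, hiT⟩, hu hiu⟩)
      · exact .inl (eq_zero_of_notMem_supp hiS)
    rcases hxu with h0 | h0 <;> simp [_root_.restrict, hiT, h0, sq_nonneg]

theorem sq_euclNorm_sub_restrict_le {x u : Fin d → ℝ} {T U : Finset (Fin d)}
    (hx : (supp x).card ≤ T.card) (hu : supp u ⊆ U) (hTU : T ⊆ U)
    (htop : ∀ i ∈ T, ∀ j ∉ T, |u j| ≤ |u i|) :
    euclNorm (x - restrict u T) ^ 2 ≤ euclNorm (x - u) ^ 2 + 2 * ∑ i ∈ U, (x - u) i ^ 2 := by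
  set S := supp x
  set J := (S \ T) ∩ U
  have hdom : ∑ i ∈ J, u i ^ 2 ≤ ∑ i ∈ T \ S, u i ^ 2 :=
    sum_le_sum_of_card_le_of_forall_le
      ((card_le_card inter_subset_left).trans (card_sdiff_le_card_sdiff_iff.2 hx))
      (fun _ _ => sq_nonneg _)
      fun j hj i hi => sq_le_sq.2 (htop i (mem_sdiff.1 hi).1 j (mem_sdiff.1 (mem_inter.1 hj).1).2)
  have hTS : ∑ i ∈ T \ S, u i ^ 2 = ∑ i ∈ T \ S, (x - u) i ^ 2 :=
    sum_congr rfl fun i hi => by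
      rw [Pi.sub_apply, eq_zero_of_notMem_supp (mem_sdiff.1 hi).2, zero_sub, neg_sq]
  have hJU : ∑ i ∈ J, (x - u) i ^ 2 + ∑ i ∈ T \ S, (x - u) i ^ 2 ≤ ∑ i ∈ U, (x - u) i ^ 2 := by
    rw [← sum_union (disjoint_left.2 fun i hiJ hiTS =>
      (mem_sdiff.1 hiTS).2 (mem_sdiff.1 (mem_inter.1 hiJ).1).1)]
    exact sum_le_sum_of_subset_of_nonneg (union_subset inter_subset_right (sdiff_subset.trans hTU))
      fun _ _ _ => sq_nonneg _
  calc euclNorm (x - restrict u T) ^ 2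
      ≤ ∑ i, ((x - u) i ^ 2 + if i ∈ J then 2 * ((x - u) i ^ 2 + u i ^ 2) else 0) := by
        rw [euclNorm_sq]
        exact sum_le_sum fun i _ => sq_sub_restrict_apply_le hu i
    _ = euclNorm (x - u) ^ 2 + 2 * (∑ i ∈ J, (x - u) i ^ 2 + ∑ i ∈ J, u i ^ 2) := by
        rw [sum_add_distrib, sum_ite_mem, univ_inter, ← mul_sum, sum_add_distrib, euclNorm_sq]
    _ ≤ euclNorm (x - u) ^ 2 + 2 * ∑ i ∈ U, (x - u) i ^ 2 := by linarith

theorem CoSaMPStep.card_supp_le {K : ℕ} {y : Fin m → ℝ} {xp xn : Fin d → ℝ}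
    (hstep : CoSaMPStep K A y xp xn) : (supp xn).card ≤ K := by
  obtain ⟨-, Sn, u, -, -, -, -, hSn, -, rfl⟩ := hstep
  exact hSn ▸ card_le_card (supp_restrict_subset u Sn)

/-- `U` is the augmented support `supp xp ∪ h`. -/
theorem CoSaMPStep.exists_tail_bound {K : ℕ} {xS xp xn : Fin d → ℝ} (hA : RIP A (4 * K) δ)
    (hS : (supp xS).card ≤ K) (hp : (supp xp).card ≤ K)
    (hstep : CoSaMPStep K A (A *ᵥ xS) xp xn) :
    ∃ U : Finset (Fin d), ∑ i ∈ Uᶜ, xS i ^ 2 ≤ 2 * δ ^ 2 * euclNorm (xS - xp) ^ 2 ∧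
      (1 - δ ^ 2) * euclNorm (xS - xn) ^ 2 ≤ (1 + 2 * δ ^ 2) * ∑ i ∈ Uᶜ, xS i ^ 2 := by
  obtain ⟨h, Sn, u, hh, htop, hLS, hSnU, hSn, hSntop, rfl⟩ := hstep
  have hv : (supp (xS - xp)).card ≤ 2 * K :=
    (card_le_card (supp_sub_subset xS xp)).trans ((card_union_le _ _).trans (by omega))
  have hU : (supp xS ∪ (supp xp ∪ h)).card ≤ 4 * K := by
    have := card_union_le (supp xS) (supp xp ∪ h)
    have := card_union_le (supp xp) h
    omega
  refine ⟨supp xp ∪ h, ?_, ?_⟩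
  · have hmiss : ∑ i ∈ (supp xp ∪ h)ᶜ, xS i ^ 2 = ∑ i ∈ (supp xp ∪ h)ᶜ, (xS - xp) i ^ 2 :=
      sum_congr rfl fun i hi => by
        rw [Pi.sub_apply, eq_zero_of_notMem_supp fun hp => mem_compl.1 hi (mem_union_left _ hp),
          sub_zero]
    rw [← mulVec_sub] at htop
    calc ∑ i ∈ (supp xp ∪ h)ᶜ, xS i ^ 2 = ∑ i ∈ (supp xp ∪ h)ᶜ, (xS - xp) i ^ 2 := hmiss
      _ ≤ ∑ i ∈ hᶜ, (xS - xp) i ^ 2 :=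
        sum_le_sum_of_subset_of_nonneg (compl_subset_compl.2 subset_union_right)
          fun _ _ _ => sq_nonneg _
      _ ≤ 2 * δ ^ 2 * euclNorm (xS - xp) ^ 2 :=
        hA.sum_sq_compl_le_of_top_correlations _ (by omega)
          ((card_union_le _ _).trans (by omega)) htop
  · have hprune := sq_euclNorm_sub_restrict_le (hSn ▸ hS) hLS.1 hSnU hSntop
    have hon := hLS.sum_sq_sub_le hA hU
    have hoff := hLS.one_sub_sq_mul_le hA hU
    have h1d : 0 ≤ 1 - δ ^ 2 := by linarith [hA.sq_lt_one]
    calc (1 - δ ^ 2) * euclNorm (xS - restrict u Sn) ^ 2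
        ≤ (1 - δ ^ 2) * ((1 + 2 * δ ^ 2) * euclNorm (xS - u) ^ 2) :=
          mul_le_mul_of_nonneg_left (by linarith) h1d
      _ = (1 + 2 * δ ^ 2) * ((1 - δ ^ 2) * euclNorm (xS - u) ^ 2) := by ring
      _ ≤ (1 + 2 * δ ^ 2) * ∑ i ∈ (supp xp ∪ h)ᶜ, xS i ^ 2 :=
          mul_le_mul_of_nonneg_left hoff (by positivity)

end Steps

/-- The contraction factor `ρ_{4K}` of one CoSaMP iteration, as a function of `δ_{4K}`. -/
noncomputable def cosampRate (δ : ℝ) : ℝ := √(2 * δ ^ 2 * (1 + 2 * δ ^ 2) / (1 - δ ^ 2))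

theorem cosampRate_nonneg (δ : ℝ) : 0 ≤ cosampRate δ :=
  Real.sqrt_nonneg _

theorem sq_cosampRate_mul {δ : ℝ} (hδ : δ ^ 2 < 1) :
    cosampRate δ ^ 2 * (1 - δ ^ 2) = 2 * δ ^ 2 * (1 + 2 * δ ^ 2) := by
  have h1d : 0 < 1 - δ ^ 2 := sub_pos.2 hδ
  rw [cosampRate, Real.sq_sqrt (by positivity), div_mul_cancel₀ _ h1d.ne']

theorem two_mul_sq_le_sq_cosampRate {δ : ℝ} (hδ : δ ^ 2 < 1) : 2 * δ ^ 2 ≤ cosampRate δ ^ 2 := by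
  refine le_of_mul_le_mul_right ?_ (sub_pos.2 hδ)
  rw [sq_cosampRate_mul hδ]
  nlinarith [sq_nonneg δ]

section Iterations

variable {m d K : ℕ} {A : Matrix (Fin m) (Fin d) ℝ} {δ : ℝ} {xS xp xn : Fin d → ℝ}

theorem CoSaMPStep.euclNorm_sub_le (hA : RIP A (4 * K) δ) (hS : (supp xS).card ≤ K)
    (hp : (supp xp).card ≤ K) (hstep : CoSaMPStep K A (A *ᵥ xS) xp xn) :
    euclNorm (xS - xn) ≤ cosampRate δ * euclNorm (xS - xp) := by
  obtain ⟨U, htail, hnext⟩ := hstep.exists_tail_bound hA hS hp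
  refine (sq_le_sq₀ (euclNorm_nonneg _)
    (mul_nonneg (cosampRate_nonneg δ) (euclNorm_nonneg _))).1 ?_
  refine le_of_mul_le_mul_right ?_ (sub_pos.2 hA.sq_lt_one)
  calc euclNorm (xS - xn) ^ 2 * (1 - δ ^ 2) ≤ (1 + 2 * δ ^ 2) * ∑ i ∈ Uᶜ, xS i ^ 2 := by
        linarith
    _ ≤ (1 + 2 * δ ^ 2) * (2 * δ ^ 2 * euclNorm (xS - xp) ^ 2) := by gcongr
    _ = (cosampRate δ * euclNorm (xS - xp)) ^ 2 * (1 - δ ^ 2) := by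
        rw [mul_pow, mul_right_comm (cosampRate δ ^ 2), sq_cosampRate_mul hA.sq_lt_one]
        ring

/-- The missed energy is too small to contain an entry of `xS`, so the augmented support contains
`supp xS`, and then least squares and pruning are exact. -/
theorem CoSaMPStep.eq_of_sq_lt (hA : RIP A (4 * K) δ) (hS : (supp xS).card ≤ K)
    (hp : (supp xp).card ≤ K) (hstep : CoSaMPStep K A (A *ᵥ xS) xp xn) {t : ℝ}
    (ht : ∀ i, xS i ≠ 0 → t ≤ xS i ^ 2) (hlt : 2 * δ ^ 2 * euclNorm (xS - xp) ^ 2 < t) :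
    xn = xS := by
  obtain ⟨U, htail, hnext⟩ := hstep.exists_tail_bound hA hS hp
  have hmiss : ∀ i ∈ Uᶜ, xS i = 0 := fun i hi => by
    by_contra hne
    have := single_le_sum (f := fun i => xS i ^ 2) (fun _ _ => sq_nonneg _) hi
    linarith [ht i hne]
  rw [sum_eq_zero fun i hi => by rw [hmiss i hi]; ring, mul_zero] at hnext
  have h1d : 0 < 1 - δ ^ 2 := sub_pos.2 hA.sq_lt_one
  have hzero : euclNorm (xS - xn) ^ 2 ≤ 0 := by nlinarith
  refine (sub_eq_zero.1 ?_).symm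
  rw [← euclNorm_eq_zero]
  exact pow_eq_zero_iff two_ne_zero |>.1 (le_antisymm hzero (sq_nonneg _))

theorem cosamp_iterate_euclNorm_sub_le {X : ℕ → Fin d → ℝ} {k : ℕ} (hA : RIP A (4 * K) δ)
    (hS : (supp xS).card ≤ K) (hX0 : X 0 = 0)
    (hsteps : ∀ i < k, CoSaMPStep K A (A *ᵥ xS) (X i) (X (i + 1))) :
    ∀ n ≤ k, (supp (X n)).card ≤ K ∧ euclNorm (xS - X n) ≤ cosampRate δ ^ n * euclNorm xS := by
  intro n hn
  induction n with
  | zero => simp [hX0, supp]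
  | succ n ih =>
    obtain ⟨hcard, hdist⟩ := ih (by omega)
    have hstep := hsteps n (by omega)
    refine ⟨hstep.card_supp_le, ?_⟩
    calc euclNorm (xS - X (n + 1)) ≤ cosampRate δ * euclNorm (xS - X n) :=
          hstep.euclNorm_sub_le hA hS hcard
      _ ≤ cosampRate δ * (cosampRate δ ^ n * euclNorm xS) := by
          gcongr
          exact cosampRate_nonneg δ
      _ = cosampRate δ ^ (n + 1) * euclNorm xS := by ring

end Iterations

theorem cosamp_noiseless_iterations_general
    {m d K : ℕ} (A : Matrix (Fin m) (Fin d) ℝ) (xS : Fin d → ℝ)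
    (δ4 ρ4 : ℝ)
    (hxS : (supp xS).card ≤ K)
    (hRIP4 : RIP A (4 * K) δ4)
    (hρ4 : ρ4 = Real.sqrt (2 * δ4 ^ 2 * (1 + 2 * δ4 ^ 2) / (1 - δ4 ^ 2)))
    (xstarK : ℝ)
    (hxstar_le : ∀ i, xS i ≠ 0 → xstarK ≤ |xS i|)
    (X : ℕ → Fin d → ℝ) (hX0 : X 0 = 0) (k : ℕ)
    (hsteps : ∀ i < k, CoSaMPStep K A (A.mulVec xS) (X i) (X (i + 1)))
    (hgap : ρ4 ^ k * euclNorm xS < xstarK) :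
    X k = xS := by
  obtain rfl : ρ4 = cosampRate δ4 := hρ4
  have hρ := cosampRate_nonneg δ4
  have hxS0 := euclNorm_nonneg xS
  have hxstar : 0 < xstarK := lt_of_le_of_lt (by positivity) hgap
  cases k with
  | zero =>
    rw [pow_zero, one_mul] at hgap
    rw [hX0, eq_zero_of_euclNorm_lt hxstar_le hgap]
  | succ k =>
    obtain ⟨hcard, hdist⟩ := cosamp_iterate_euclNorm_sub_le hRIP4 hxS hX0 hsteps k k.le_succ
    refine (hsteps k k.lt_succ_self).eq_of_sq_lt hRIP4 hxS hcard
      (fun i hi => sq_le_sq.2 (abs_of_pos hxstar ▸ hxstar_le i hi)) ?_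
    calc 2 * δ4 ^ 2 * euclNorm (xS - X k) ^ 2
        ≤ cosampRate δ4 ^ 2 * euclNorm (xS - X k) ^ 2 := by
          gcongr
          exact two_mul_sq_le_sq_cosampRate hRIP4.sq_lt_one
      _ ≤ (cosampRate δ4 ^ (k + 1) * euclNorm xS) ^ 2 := by
          rw [← mul_pow, pow_succ' (cosampRate δ4) k, mul_assoc]
          exact pow_le_pow_left₀ (mul_nonneg hρ (euclNorm_nonneg _))
            (mul_le_mul_of_nonneg_left hdist hρ) 2
      _ < xstarK ^ 2 := by gcongr

/-- Remark 1: in the noiseless case, CoSaMP starting from `x⁰ = 0`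
recovers `x_S` exactly after `k` iterations as soon as `ρ_{4K}^k ‖x_S‖ < x*_K`, where
`x*_K` is the smallest nonzero magnitude of `x_S`. -/
theorem cosamp_noiseless_iterations
    {m d K : ℕ} (A : Matrix (Fin m) (Fin d) ℝ) (xS : Fin d → ℝ)
    (δ3 δ4 ρ4 : ℝ)
    (hxS : (supp xS).card ≤ K)
    (hRIP3 : RIP A (3 * K) δ3) (hRIP4 : RIP A (4 * K) δ4)
    (hρ4 : ρ4 = Real.sqrt (2 * δ4 ^ 2 * (1 + 2 * δ4 ^ 2) / (1 - δ4 ^ 2)))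
    (hρ4lt : ρ4 < 1)
    (xstarK : ℝ)
    (hxstar_le : ∀ i, xS i ≠ 0 → xstarK ≤ |xS i|)
    (hxstar_mem : ∃ i, xS i ≠ 0 ∧ |xS i| = xstarK)
    (X : ℕ → Fin d → ℝ) (hX0 : X 0 = 0) (k : ℕ)
    (hsteps : ∀ i < k, CoSaMPStep K A (A.mulVec xS) (X i) (X (i + 1)))
    (hgap : ρ4 ^ k * euclNorm xS < xstarK) :
    X k = xS :=
  cosamp_noiseless_iterations_general A xS δ4 ρ4 hxS hRIP4 hρ4 xstarK hxstar_le X hX0 k hsteps hgap
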